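/- arXiv:1704.05281 — 2 statements merged into one kernel-verified Lean document; each statement's English description precedes it below -/
import Mathlib

section
/- Let $0<p,\lambda<1$. The family of functions $f_c(z)=(1-\bar c z)^{-p(1-\lambda)/2}$, $c\in\mathbb{D}$, satisfies $\sup_{c\in\mathbb{D}}\|f_c\|_{\mathcal{D}_p^\lambda}<\infty$, i.e. there is a constant $K$ with $(1-|a|^2)^{p(1-\lambda)}\int_{\mathbb{D}}|f_c'(z)|^2(1-|\varphi_a(z)|^2)^p\,dm(z)\le K$ for all $a,c\in\mathbb{D}$. -/
open MeasureTheory Complex Metric Set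

noncomputable section

/-- planar Lebesgue measure normalized so that the unit disc has measure 1 -/
def dA : Measure ℂ := (ENNReal.ofReal Real.pi)⁻¹ • volume

/-- the open unit disc -/
def unitDisc : Set ℂ := Metric.ball (0 : ℂ) 1

/-- the disc automorphism exchanging 0 and a -/
def mobius (a z : ℂ) : ℂ := (a - z) / (1 - (starRingEnd ℂ) a * z)

/-- weighted Dirichlet energy of the hyperbolic translate of `f` by `a`:
`∫_𝔻 |f'(z)|² (1-|φ_a(z)|²)^p dm(z)` -/
def dirEnergy (p : ℝ) (a : ℂ) (f : ℂ → ℂ) : ℝ :=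
  ∫ z in unitDisc, ‖deriv f z‖ ^ 2 * (1 - ‖mobius a z‖ ^ 2) ^ p ∂dA

/-- Carleson box over the arc of center `e^{iθ}` and normalized length `h` -/
def carlesonBox (θ h : ℝ) : Set ℂ :=
  {z | z ∈ unitDisc ∧ 1 - h ≤ ‖z‖ ∧
    ∃ t : ℝ, |t| ≤ Real.pi * h ∧ z = (‖z‖ : ℂ) * Complex.exp (Complex.I * (θ + t))}

/-- the box energy `∫_{S(I)} |f'(z)|² (1-|z|²)^p dm(z)` -/
def boxEnergy (p θ h : ℝ) (f : ℂ → ℂ) : ℝ :=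
  ∫ z in carlesonBox θ h, ‖deriv f z‖ ^ 2 * (1 - ‖z‖ ^ 2) ^ p ∂dA

/-- membership in the Dirichlet–Morrey space `𝒟_p^λ` -/
def memDM (p lam : ℝ) (f : ℂ → ℂ) : Prop :=
  AnalyticOn ℂ f unitDisc ∧
    ∃ C : ℝ, ∀ a ∈ unitDisc, (1 - ‖a‖ ^ 2) ^ (p * (1 - lam)) * dirEnergy p a f ≤ C

/-- the Dirichlet–Morrey norm `|f(0)| + sup_a (1-|a|²)^{p(1-λ)/2} ‖f∘φ_a - f(a)‖_{𝒟_p}` -/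
def dmNorm (p lam : ℝ) (f : ℂ → ℂ) : ℝ :=
  ‖f 0‖ + ⨆ a : unitDisc, (1 - ‖(a : ℂ)‖ ^ 2) ^ (p * (1 - lam) / 2) *
    (dirEnergy p (a : ℂ) f) ^ (1 / 2 : ℝ)

/-- square of the weighted Dirichlet norm -/
def dpNormSq (p : ℝ) (f : ℂ → ℂ) : ℝ :=
  ‖f 0‖ ^ 2 + ∫ z in unitDisc, ‖deriv f z‖ ^ 2 * (1 - ‖z‖ ^ 2) ^ p ∂dA

/-- membership in the weighted Dirichlet space `𝒟_p` -/
def memDp (p : ℝ) (f : ℂ → ℂ) : Prop :=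
  AnalyticOn ℂ f unitDisc ∧
    IntegrableOn (fun z => ‖deriv f z‖ ^ 2 * (1 - ‖z‖ ^ 2) ^ p) unitDisc dA

/-- the integration operator `I_g(f)(z) = ∫₀^z f'(w) g(w) dw` -/
def Iop (g f : ℂ → ℂ) (z : ℂ) : ℂ :=
  ∫ t in (0 : ℝ)..1, deriv f ((t : ℂ) * z) * g ((t : ℂ) * z) * z

/-- the integration operator `J_g(f)(z) = ∫₀^z f(w) g'(w) dw` -/
def Jop (g f : ℂ → ℂ) (z : ℂ) : ℂ :=
  ∫ t in (0 : ℝ)..1, f ((t : ℂ) * z) * deriv g ((t : ℂ) * z) * z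

/-!
With `q = p(1-λ)` one has `|f_c'(z)|² ≤ |1 - c̄z|^(-(2+q))` and
`1 - |φ_a(z)|² = (1 - |a|²)(1 - |z|²) / |1 - āz|²`, so the claim reduces to the two-point estimate
`∫_𝔻 (1 - |z|²)^p |1 - āz|^(-2p) |1 - c̄z|^(-(2+q)) dm ≲ |1 - āc|^(-(p+q))`,
after which `(1 - |a|²)^(p+q) |1 - āc|^(-(p+q)) ≤ 2^(p+q)`.

For the two-point estimate cut the disc at the scale `R = |1 - āc| / 2`. Where `|1 - āz| ≤ R`, the
quasi-triangle inequality for `|1 - w̄z|` gives `|1 - c̄z| ≥ R`; on the shells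
`R 2^k ≤ |1 - āz| ≤ R 2^(k+1)` it gives `|1 - c̄z| ≤ R 2^(k+2)`, and the shells contribute a
geometric series. Each piece is an integral of `|1 - w̄z|^(-e)`, `e < 2`, over
`{z ∈ 𝔻 : |1 - w̄z| ≤ ρ}`, which is `≲ ρ^(2-e)` by a dyadic decomposition, because
`m {z ∈ 𝔻 : |1 - w̄z| ≤ r} ≤ 4r²`.
-/

open ComplexConjugate
open scoped ENNReal

theorem mem_unitDisc {z : ℂ} : z ∈ unitDisc ↔ ‖z‖ < 1 := mem_ball_zero_iff

section DiscGeometry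

variable {a c w z : ℂ}

theorem norm_one_sub_conj_mul_comm (a z : ℂ) : ‖1 - conj a * z‖ = ‖1 - conj z * a‖ := by
  rw [← RCLike.norm_conj]
  simp [mul_comm]

theorem norm_one_sub_conj_mul_sq_sub_norm_sub_sq (a z : ℂ) :
    ‖1 - conj a * z‖ ^ 2 - ‖a - z‖ ^ 2 = (1 - ‖a‖ ^ 2) * (1 - ‖z‖ ^ 2) := by
  simp only [← Complex.normSq_eq_norm_sq, Complex.normSq_apply, Complex.sub_re, Complex.sub_im,
    Complex.mul_re, Complex.mul_im, Complex.conj_re, Complex.conj_im, Complex.one_re,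
    Complex.one_im]
  ring

theorem one_sub_norm_mul_norm_le_norm_one_sub_conj_mul (w z : ℂ) :
    1 - ‖w‖ * ‖z‖ ≤ ‖1 - conj w * z‖ := by
  simpa using norm_sub_norm_le (1 : ℂ) (conj w * z)

theorem norm_one_sub_conj_mul_pos (hw : ‖w‖ ≤ 1) (hz : ‖z‖ < 1) : 0 < ‖1 - conj w * z‖ := by
  have := one_sub_norm_mul_norm_le_norm_one_sub_conj_mul w z
  nlinarith [norm_nonneg w, norm_nonneg z]

theorem one_sub_norm_sq_le_two_mul_norm_one_sub_conj_mul (hw : ‖w‖ ≤ 1) (hz : ‖z‖ ≤ 1) :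
    1 - ‖z‖ ^ 2 ≤ 2 * ‖1 - conj w * z‖ := by
  have := one_sub_norm_mul_norm_le_norm_one_sub_conj_mul w z
  nlinarith [norm_nonneg w, norm_nonneg z]

theorem norm_sub_le_norm_one_sub_conj_mul (ha : ‖a‖ ≤ 1) (hz : ‖z‖ ≤ 1) :
    ‖a - z‖ ≤ ‖1 - conj a * z‖ := by
  have := norm_one_sub_conj_mul_sq_sub_norm_sub_sq a z
  have ha' : 0 ≤ 1 - ‖a‖ ^ 2 := by nlinarith [norm_nonneg a]
  have hz' : 0 ≤ 1 - ‖z‖ ^ 2 := by nlinarith [norm_nonneg z]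
  exact (pow_le_pow_iff_left₀ (norm_nonneg _) (norm_nonneg _) two_ne_zero).mp
    (by nlinarith [mul_nonneg ha' hz'])

theorem norm_one_sub_conj_mul_le_add (ha : ‖a‖ ≤ 1) (hc : ‖c‖ ≤ 1) (hz : ‖z‖ ≤ 1) :
    ‖1 - conj a * c‖ ≤ ‖1 - conj a * z‖ + ‖1 - conj c * z‖ := by
  have hsplit : ‖conj a * (z - c)‖ ≤ ‖1 - conj c * z‖ := by
    rw [norm_mul, RCLike.norm_conj, norm_sub_rev]
    calc ‖a‖ * ‖c - z‖ ≤ ‖c - z‖ := mul_le_of_le_one_left (norm_nonneg _) ha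
      _ ≤ ‖1 - conj c * z‖ := norm_sub_le_norm_one_sub_conj_mul hc hz
  calc ‖1 - conj a * c‖ = ‖(1 - conj a * z) + conj a * (z - c)‖ := by ring_nf
    _ ≤ ‖1 - conj a * z‖ + ‖1 - conj c * z‖ := (norm_add_le _ _).trans (by linarith)

theorem one_sub_norm_mobius_sq (h : 1 - conj a * z ≠ 0) :
    1 - ‖mobius a z‖ ^ 2 = (1 - ‖a‖ ^ 2) * (1 - ‖z‖ ^ 2) / ‖1 - conj a * z‖ ^ 2 := by
  rw [mobius, norm_div, div_pow, ← norm_one_sub_conj_mul_sq_sub_norm_sub_sq, sub_div,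
    div_self (by positivity)]

end DiscGeometry

section Measure

theorem dA_closedBall (x : ℂ) (r : ℝ) : dA (closedBall x r) = ENNReal.ofReal r ^ 2 := by
  rw [dA, Measure.smul_apply, Complex.volume_closedBall, ← ENNReal.ofReal_coe_nnreal,
    NNReal.coe_real_pi, smul_eq_mul, mul_comm, mul_assoc,
    ENNReal.mul_inv_cancel (by simp [Real.pi_pos]) ENNReal.ofReal_ne_top, mul_one]

theorem dA_unitDisc_inter_norm_one_sub_conj_mul_le (w : ℂ) {r : ℝ} (hr : 0 < r) :
    dA (unitDisc ∩ {z | ‖1 - conj w * z‖ ≤ r}) ≤ ENNReal.ofReal (4 * r ^ 2) := by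
  suffices h : ∃ x, unitDisc ∩ {z | ‖1 - conj w * z‖ ≤ r} ⊆ closedBall x (2 * r) by
    obtain ⟨x, hx⟩ := h
    calc dA _ ≤ dA (closedBall x (2 * r)) := measure_mono hx
      _ = ENNReal.ofReal (4 * r ^ 2) := by
        rw [dA_closedBall, ← ENNReal.ofReal_pow (by positivity)]
        ring_nf
  rcases lt_or_ge ‖w‖ (1 / 2) with hw | hw
  · refine ⟨0, fun z ⟨hz, hzr⟩ => ?_⟩
    rw [mem_unitDisc] at hz
    have := one_sub_norm_mul_norm_le_norm_one_sub_conj_mul w z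
    rw [mem_closedBall_zero_iff]
    nlinarith [norm_nonneg w, norm_nonneg z, hzr.out]
  · have hw0 : conj w ≠ 0 := by
      rw [← norm_pos_iff, RCLike.norm_conj]
      linarith
    refine ⟨(conj w)⁻¹, fun z ⟨_, hzr⟩ => ?_⟩
    have hdist : z - (conj w)⁻¹ = -(1 - conj w * z) / conj w := by
      field_simp
      ring
    rw [mem_closedBall, dist_eq_norm, hdist, norm_div, norm_neg, RCLike.norm_conj,
      div_le_iff₀ (by linarith)]
    nlinarith [hzr.out]

end Measure

section Dyadic

variable {X : Type*} [MeasurableSpace X] {μ : Measure X}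

theorem setLIntegral_iUnion_le_of_le_geometric {S : ℕ → Set X} {f : X → ℝ≥0∞} {A t : ℝ}
    (hA : 0 ≤ A) (ht0 : 0 ≤ t) (ht1 : t < 1)
    (h : ∀ k, ∫⁻ x in S k, f x ∂μ ≤ ENNReal.ofReal (A * t ^ k)) :
    ∫⁻ x in ⋃ k, S k, f x ∂μ ≤ ENNReal.ofReal (A / (1 - t)) := by
  have hsum : HasSum (fun k : ℕ => A * t ^ k) (A * (1 - t)⁻¹) :=
    (hasSum_geometric_of_lt_one ht0 ht1).mul_left A
  calc ∫⁻ x in ⋃ k, S k, f x ∂μ ≤ ∑' k, ∫⁻ x in S k, f x ∂μ := lintegral_iUnion_le _ _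
    _ ≤ ∑' k : ℕ, ENNReal.ofReal (A * t ^ k) := ENNReal.tsum_le_tsum h
    _ = ENNReal.ofReal (A / (1 - t)) := by
      rw [← ENNReal.ofReal_tsum_of_nonneg (fun k => by positivity) hsum.summable, hsum.tsum_eq,
        div_eq_mul_inv]

theorem setLIntegral_ofReal_le_of_le_mul {T S : Set X} {F G : X → ℝ} {C B : ℝ} (hC : 0 ≤ C)
    (hG : Measurable G) (hTS : T ⊆ S) (hF : ∀ x ∈ T, F x ≤ C * G x)
    (hB : ∫⁻ x in S, ENNReal.ofReal (G x) ∂μ ≤ ENNReal.ofReal B) :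
    ∫⁻ x in T, ENNReal.ofReal (F x) ∂μ ≤ ENNReal.ofReal (C * B) := by
  calc ∫⁻ x in T, ENNReal.ofReal (F x) ∂μ
      ≤ ∫⁻ x in T, ENNReal.ofReal C * ENNReal.ofReal (G x) ∂μ :=
        setLIntegral_mono (measurable_const.mul hG.ennreal_ofReal) fun x hx => by
          rw [← ENNReal.ofReal_mul hC]
          exact ENNReal.ofReal_le_ofReal (hF x hx)
    _ = ENNReal.ofReal C * ∫⁻ x in T, ENNReal.ofReal (G x) ∂μ :=
        lintegral_const_mul' _ _ ENNReal.ofReal_ne_top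
    _ ≤ ENNReal.ofReal C * ENNReal.ofReal B := by grw [lintegral_mono_set hTS, hB]
    _ = ENNReal.ofReal (C * B) := (ENNReal.ofReal_mul hC).symm

theorem setIntegral_le_of_norm_le_mul {s : Set X} {F G : X → ℝ} {M B : ℝ} (hM : 0 ≤ M)
    (hB : 0 ≤ B) (hG : Measurable G) (hF : ∀ x ∈ s, ‖F x‖ ≤ M * G x)
    (hGB : ∫⁻ x in s, ENNReal.ofReal (G x) ∂μ ≤ ENNReal.ofReal B) :
    ∫ x in s, F x ∂μ ≤ M * B := by
  calc ∫ x in s, F x ∂μ ≤ ‖∫ x in s, F x ∂μ‖ := Real.le_norm_self _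
    _ ≤ (∫⁻ x in s, ENNReal.ofReal ‖F x‖ ∂μ).toReal := norm_integral_le_lintegral_norm _
    _ ≤ M * B := ENNReal.toReal_le_of_le_ofReal (by positivity)
        (setLIntegral_ofReal_le_of_le_mul hM hG subset_rfl hF hGB)

theorem setLIntegral_rpow_neg_le_of_measure_le {s : Set X} {g : X → ℝ} {C d e ρ : ℝ}
    (hC : 0 ≤ C) (he : 0 ≤ e) (hed : e < d) (hρ : 0 < ρ) (hg : ∀ x ∈ s, 0 < g x)
    (hμ : ∀ r > 0, μ (s ∩ {x | g x ≤ r}) ≤ ENNReal.ofReal (C * r ^ d)) :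
    ∫⁻ x in s ∩ {x | g x ≤ ρ}, ENNReal.ofReal (g x ^ (-e)) ∂μ ≤
      ENNReal.ofReal (C * 2 ^ e / (1 - 2 ^ (e - d)) * ρ ^ (d - e)) := by
  set S : ℕ → Set X := fun k => s ∩ {x | g x ≤ ρ / 2 ^ k} ∩ {x | ρ / 2 ^ (k + 1) < g x}
  have hcover : s ∩ {x | g x ≤ ρ} ⊆ ⋃ k, S k := by
    rintro x ⟨hx, hxρ⟩
    have hgx := hg x hx
    obtain ⟨k, hk, hk1⟩ := exists_nat_pow_near ((one_le_div hgx).2 hxρ) one_lt_two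
    refine mem_iUnion.2 ⟨k, ⟨hx, ?_⟩, ?_⟩
    · rw [mem_ofPred_eq, le_div_iff₀ (by positivity), mul_comm]
      exact (le_div_iff₀ hgx).1 hk
    · rw [mem_ofPred_eq, div_lt_iff₀ (by positivity), mul_comm]
      exact (div_lt_iff₀ hgx).1 hk1
  have hshell : ∀ k : ℕ, ∫⁻ x in S k, ENNReal.ofReal (g x ^ (-e)) ∂μ ≤
      ENNReal.ofReal (C * 2 ^ e * ρ ^ (d - e) * (2 ^ (e - d)) ^ k) := by
    intro k
    set r := ρ / 2 ^ k
    have hr : 0 < r := by positivity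
    calc ∫⁻ x in S k, ENNReal.ofReal (g x ^ (-e)) ∂μ
        ≤ ∫⁻ _ in S k, ENNReal.ofReal ((r / 2) ^ (-e)) ∂μ := by
          refine setLIntegral_mono measurable_const fun x hx => ENNReal.ofReal_le_ofReal ?_
          refine Real.rpow_le_rpow_of_nonpos (by positivity) (le_of_lt ?_) (by linarith)
          simpa [r, pow_succ, div_div] using hx.2
      _ = ENNReal.ofReal ((r / 2) ^ (-e)) * μ (S k) := setLIntegral_const _ _
      _ ≤ ENNReal.ofReal ((r / 2) ^ (-e)) * ENNReal.ofReal (C * r ^ d) := by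
          gcongr
          exact (measure_mono inter_subset_left).trans (hμ r hr)
      _ = ENNReal.ofReal (C * 2 ^ e * ρ ^ (d - e) * (2 ^ (e - d)) ^ k) := by
          rw [← ENNReal.ofReal_mul (by positivity)]
          congr 1
          rw [Real.div_rpow hr.le zero_le_two, Real.rpow_neg hr.le, Real.rpow_neg zero_le_two,
            Real.div_rpow hρ.le (by positivity), Real.div_rpow hρ.le (by positivity),
            ← Real.rpow_pow_comm zero_le_two, ← Real.rpow_pow_comm zero_le_two,
            Real.rpow_sub hρ, Real.rpow_sub zero_lt_two, div_pow]
          field_simp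
  calc ∫⁻ x in s ∩ {x | g x ≤ ρ}, ENNReal.ofReal (g x ^ (-e)) ∂μ
      ≤ ∫⁻ x in ⋃ k, S k, ENNReal.ofReal (g x ^ (-e)) ∂μ := lintegral_mono_set hcover
    _ ≤ ENNReal.ofReal (C * 2 ^ e * ρ ^ (d - e) / (1 - 2 ^ (e - d))) :=
        setLIntegral_iUnion_le_of_le_geometric (by positivity) (by positivity)
          (Real.rpow_lt_one_of_one_lt_of_neg one_lt_two (by linarith)) hshell
    _ = _ := by ring_nf

end Dyadic

theorem exists_setLIntegral_norm_one_sub_conj_mul_rpow_neg_le {e : ℝ} (he : 0 ≤ e) (he2 : e < 2) :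
    ∃ K ≥ 0, ∀ w : ℂ, ‖w‖ ≤ 1 → ∀ ρ > 0,
      ∫⁻ z in unitDisc ∩ {z | ‖1 - conj w * z‖ ≤ ρ}, ENNReal.ofReal (‖1 - conj w * z‖ ^ (-e)) ∂dA
        ≤ ENNReal.ofReal (K * ρ ^ (2 - e)) := by
  have ht : (2 : ℝ) ^ (e - 2) < 1 := Real.rpow_lt_one_of_one_lt_of_neg one_lt_two (by linarith)
  refine ⟨4 * 2 ^ e / (1 - 2 ^ (e - 2)), div_nonneg (by positivity) (by linarith),
    fun w hw ρ hρ => ?_⟩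
  refine setLIntegral_rpow_neg_le_of_measure_le (by norm_num) he he2 hρ
    (fun z hz => norm_one_sub_conj_mul_pos hw (mem_unitDisc.1 hz)) fun r hr => ?_
  simpa [Real.rpow_two] using dA_unitDisc_inter_norm_one_sub_conj_mul_le w hr

section TwoPoint

def twoPointKernel (p q : ℝ) (a c z : ℂ) : ℝ :=
  (1 - ‖z‖ ^ 2) ^ p * ‖1 - conj a * z‖ ^ (-(2 * p)) * ‖1 - conj c * z‖ ^ (-(2 + q))

variable {p q : ℝ} {a c z : ℂ}

theorem one_sub_norm_sq_rpow_le (hc : ‖c‖ ≤ 1) (hz : ‖z‖ ≤ 1) (hp : 0 ≤ p) :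
    (1 - ‖z‖ ^ 2) ^ p ≤ 2 ^ p * ‖1 - conj c * z‖ ^ p := by
  rw [← Real.mul_rpow zero_le_two (norm_nonneg _)]
  exact Real.rpow_le_rpow (by nlinarith [norm_nonneg z])
    (one_sub_norm_sq_le_two_mul_norm_one_sub_conj_mul hc hz) hp

theorem twoPointKernel_le_of_le_norm_one_sub_conj_mul_right (ha : ‖a‖ ≤ 1) (hz : ‖z‖ < 1)
    (hp : 0 ≤ p) (hq : 0 ≤ 2 + q) {R : ℝ} (hR : 0 < R) (hRc : R ≤ ‖1 - conj c * z‖) :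
    twoPointKernel p q a c z ≤ 2 ^ p * R ^ (-(2 + q)) * ‖1 - conj a * z‖ ^ (-p) := by
  have hu := norm_one_sub_conj_mul_pos ha hz
  calc twoPointKernel p q a c z
      ≤ 2 ^ p * ‖1 - conj a * z‖ ^ p * ‖1 - conj a * z‖ ^ (-(2 * p)) * R ^ (-(2 + q)) := by
        unfold twoPointKernel
        gcongr ?_ * _ * ?_
        exacts [one_sub_norm_sq_rpow_le ha hz.le hp,
          Real.rpow_le_rpow_of_nonpos hR hRc (by linarith)]
    _ = 2 ^ p * R ^ (-(2 + q)) * ‖1 - conj a * z‖ ^ (-p) := by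
        rw [mul_assoc (2 ^ p), ← Real.rpow_add hu]
        ring_nf

theorem twoPointKernel_le_of_le_norm_one_sub_conj_mul_left (hc : ‖c‖ ≤ 1) (hz : ‖z‖ < 1)
    (hp : 0 ≤ p) {s : ℝ} (hs : 0 < s) (hsa : s ≤ ‖1 - conj a * z‖) :
    twoPointKernel p q a c z ≤ 2 ^ p * s ^ (-(2 * p)) * ‖1 - conj c * z‖ ^ (-(2 + q - p)) := by
  have hv := norm_one_sub_conj_mul_pos hc hz
  calc twoPointKernel p q a c z
      ≤ 2 ^ p * ‖1 - conj c * z‖ ^ p * s ^ (-(2 * p)) * ‖1 - conj c * z‖ ^ (-(2 + q)) := by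
        unfold twoPointKernel
        gcongr ?_ * ?_ * _
        exacts [one_sub_norm_sq_rpow_le hc hz.le hp,
          Real.rpow_le_rpow_of_nonpos hs hsa (by linarith)]
    _ = 2 ^ p * s ^ (-(2 * p)) * ‖1 - conj c * z‖ ^ (-(2 + q - p)) := by
        rw [mul_right_comm (2 ^ p), mul_assoc (2 ^ p * s ^ _), ← Real.rpow_add hv]
        ring_nf

theorem exists_setLIntegral_twoPointKernel_near_le (hp : 0 ≤ p) (hp2 : p < 2) (hq : 0 ≤ 2 + q) :
    ∃ C ≥ 0, ∀ a c : ℂ, ‖a‖ ≤ 1 → ‖c‖ ≤ 1 → ∀ R > 0, 2 * R ≤ ‖1 - conj a * c‖ →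
      ∫⁻ z in unitDisc ∩ {z | ‖1 - conj a * z‖ ≤ R}, ENNReal.ofReal (twoPointKernel p q a c z) ∂dA
        ≤ ENNReal.ofReal (C * R ^ (-(p + q))) := by
  obtain ⟨K, hK, hint⟩ := exists_setLIntegral_norm_one_sub_conj_mul_rpow_neg_le hp hp2
  refine ⟨2 ^ p * K, by positivity, fun a c ha hc R hR hRδ => ?_⟩
  refine (setLIntegral_ofReal_le_of_le_mul (C := 2 ^ p * R ^ (-(2 + q))) (by positivity)
    (by fun_prop) subset_rfl ?_ (hint a ha R hR)).trans_eq ?_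
  · rintro z ⟨hz, hzR⟩
    rw [mem_unitDisc] at hz
    refine twoPointKernel_le_of_le_norm_one_sub_conj_mul_right ha hz hp hq hR ?_
    have := norm_one_sub_conj_mul_le_add ha hc hz.le
    linarith [hzR.out]
  · have hpow : R ^ (-(2 + q)) * R ^ (2 - p) = R ^ (-(p + q)) := by
      rw [← Real.rpow_add hR]
      ring_nf
    congr 1
    linear_combination 2 ^ p * K * hpow

theorem exists_setLIntegral_twoPointKernel_far_le (hp : 0 ≤ p) (hqp : q < p) (hpq : p ≤ 2 + q) :
    ∃ C ≥ 0, ∀ a c : ℂ, ‖a‖ ≤ 1 → ‖c‖ ≤ 1 → ∀ s > 0, ‖1 - conj a * c‖ ≤ 2 * s →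
      ∫⁻ z in unitDisc ∩ {z | s ≤ ‖1 - conj a * z‖ ∧ ‖1 - conj a * z‖ ≤ 2 * s},
        ENNReal.ofReal (twoPointKernel p q a c z) ∂dA ≤ ENNReal.ofReal (C * s ^ (-(p + q))) := by
  obtain ⟨K, hK, hint⟩ :=
    exists_setLIntegral_norm_one_sub_conj_mul_rpow_neg_le (e := 2 + q - p) (by linarith)
      (by linarith)
  refine ⟨2 ^ p * 4 ^ (p - q) * K, by positivity, fun a c ha hc s hs hδs => ?_⟩
  refine (setLIntegral_ofReal_le_of_le_mul (C := 2 ^ p * s ^ (-(2 * p))) (by positivity)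
    (by fun_prop) ?_ ?_ (hint c hc (4 * s) (by positivity))).trans_eq ?_
  · rintro z ⟨hz, -, hzs⟩
    refine ⟨hz, ?_⟩
    have := norm_one_sub_conj_mul_le_add hc (mem_unitDisc.1 hz).le ha
    rw [norm_one_sub_conj_mul_comm c a, norm_one_sub_conj_mul_comm z a] at this
    show _ ≤ 4 * s
    linarith
  · rintro z ⟨hz, hsz, -⟩
    exact twoPointKernel_le_of_le_norm_one_sub_conj_mul_left hc (mem_unitDisc.1 hz) hp hs hsz
  · have hpow : s ^ (-(2 * p)) * s ^ (p - q) = s ^ (-(p + q)) := by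
      rw [← Real.rpow_add hs]
      ring_nf
    rw [show (2 : ℝ) - (2 + q - p) = p - q by ring, Real.mul_rpow (by norm_num) hs.le]
    congr 1
    linear_combination 2 ^ p * 4 ^ (p - q) * K * hpow

theorem exists_lintegral_twoPointKernel_le (hq : 0 < q) (hqp : q < p) (hp : p < 2) :
    ∃ C ≥ 0, ∀ a c : ℂ, ‖a‖ ≤ 1 → ‖c‖ < 1 →
      ∫⁻ z in unitDisc, ENNReal.ofReal (twoPointKernel p q a c z) ∂dA ≤
        ENNReal.ofReal (C * ‖1 - conj a * c‖ ^ (-(p + q))) := by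
  obtain ⟨C₁, hC₁, hnear⟩ :=
    exists_setLIntegral_twoPointKernel_near_le (q := q) (by linarith) hp (by linarith)
  obtain ⟨C₂, hC₂, hfar⟩ :=
    exists_setLIntegral_twoPointKernel_far_le (q := q) (by linarith) hqp (by linarith)
  set t : ℝ := 2 ^ (-(p + q))
  have ht : t < 1 := Real.rpow_lt_one_of_one_lt_of_neg one_lt_two (by linarith)
  refine ⟨2 ^ (p + q) * (C₁ + C₂ / (1 - t)),
    mul_nonneg (by positivity) (add_nonneg hC₁ (div_nonneg hC₂ (by linarith))),
    fun a c ha hc => ?_⟩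
  set R := ‖1 - conj a * c‖ / 2 with hR_def
  have hR : 0 < R := half_pos (norm_one_sub_conj_mul_pos ha hc)
  set shell : ℕ → Set ℂ := fun k => unitDisc ∩
    {z | R * 2 ^ k ≤ ‖1 - conj a * z‖ ∧ ‖1 - conj a * z‖ ≤ 2 * (R * 2 ^ k)}
  have hcover : unitDisc ⊆ (unitDisc ∩ {z | ‖1 - conj a * z‖ ≤ R}) ∪ ⋃ k, shell k := by
    intro z hz
    rcases le_or_gt ‖1 - conj a * z‖ R with hzR | hzR
    · exact Or.inl ⟨hz, hzR⟩
    obtain ⟨k, hk, hk1⟩ := exists_nat_pow_near ((one_le_div hR).2 hzR.le) one_lt_two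
    rw [le_div_iff₀ hR] at hk
    rw [div_lt_iff₀ hR] at hk1
    exact Or.inr (mem_iUnion.2 ⟨k, hz, by linarith, by rw [pow_succ] at hk1; linarith⟩)
  have hshell (k : ℕ) : ∫⁻ z in shell k, ENNReal.ofReal (twoPointKernel p q a c z) ∂dA ≤
      ENNReal.ofReal (C₂ * R ^ (-(p + q)) * t ^ k) := by
    refine (hfar a c ha hc.le (R * 2 ^ k) (by positivity) ?_).trans_eq ?_
    · nlinarith [one_le_pow₀ (M₀ := ℝ) one_le_two (n := k)]
    · rw [Real.mul_rpow hR.le (by positivity), ← Real.rpow_pow_comm zero_le_two, mul_assoc]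
  calc ∫⁻ z in unitDisc, ENNReal.ofReal (twoPointKernel p q a c z) ∂dA
      ≤ ∫⁻ z in unitDisc ∩ {z | ‖1 - conj a * z‖ ≤ R},
            ENNReal.ofReal (twoPointKernel p q a c z) ∂dA +
          ∫⁻ z in ⋃ k, shell k, ENNReal.ofReal (twoPointKernel p q a c z) ∂dA :=
        (lintegral_mono_set hcover).trans (lintegral_union_le _ _ _)
    _ ≤ ENNReal.ofReal (C₁ * R ^ (-(p + q))) + ENNReal.ofReal (C₂ * R ^ (-(p + q)) / (1 - t)) :=
        add_le_add (hnear a c ha hc.le R hR (by linarith))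
          (setLIntegral_iUnion_le_of_le_geometric (by positivity) (by positivity) ht hshell)
    _ = ENNReal.ofReal (2 ^ (p + q) * (C₁ + C₂ / (1 - t)) * ‖1 - conj a * c‖ ^ (-(p + q))) := by
        rw [← ENNReal.ofReal_add (by positivity) (div_nonneg (by positivity) (by linarith)),
          hR_def, Real.div_rpow (norm_nonneg _) zero_le_two, Real.rpow_neg zero_le_two]
        congr 1
        field_simp

end TwoPoint

section TestFunction

variable {a c z : ℂ}

theorem norm_deriv_one_sub_conj_mul_cpow (hc : ‖c‖ ≤ 1) (hz : ‖z‖ < 1) (s : ℝ) :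
    ‖deriv (fun z : ℂ => (1 - conj c * z) ^ (s : ℂ)) z‖ =
      |s| * ‖c‖ * ‖1 - conj c * z‖ ^ (s - 1) := by
  have hslit : 1 - conj c * z ∈ slitPlane := by
    rw [sub_eq_add_neg]
    refine mem_slitPlane_of_norm_lt_one ?_
    rw [norm_neg, norm_mul, RCLike.norm_conj]
    nlinarith [norm_nonneg c, norm_nonneg z]
  have hderiv : HasDerivAt (fun z : ℂ => 1 - conj c * z) (-conj c) z := by
    simpa using ((hasDerivAt_id z).const_mul (conj c)).const_sub 1
  rw [(hderiv.cpow_const hslit).deriv, show (s : ℂ) - 1 = ((s - 1 : ℝ) : ℂ) by push_cast; ring,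
    norm_mul, norm_mul, norm_neg, RCLike.norm_conj, Complex.norm_real, Real.norm_eq_abs,
    Complex.norm_cpow_real]
  ring

theorem one_sub_norm_mobius_sq_rpow (ha : ‖a‖ ≤ 1) (hz : ‖z‖ < 1) (p : ℝ) :
    (1 - ‖mobius a z‖ ^ 2) ^ p =
      ((1 - ‖a‖ ^ 2) * (1 - ‖z‖ ^ 2)) ^ p * ‖1 - conj a * z‖ ^ (-(2 * p)) := by
  have hu := norm_one_sub_conj_mul_pos ha hz
  rw [one_sub_norm_mobius_sq (norm_pos_iff.1 hu),
    Real.div_rpow (mul_nonneg (by nlinarith [norm_nonneg a]) (by nlinarith [norm_nonneg z]))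
      (by positivity), div_eq_mul_inv, ← Real.rpow_natCast ‖1 - conj a * z‖ 2,
    ← Real.rpow_mul hu.le, ← Real.rpow_neg hu.le]
  push_cast
  ring_nf

theorem norm_deriv_sq_mul_one_sub_norm_mobius_sq_rpow_le {p q : ℝ} (ha : ‖a‖ ≤ 1)
    (hc : ‖c‖ ≤ 1) (hz : ‖z‖ < 1) (hq : |q| ≤ 2) :
    ‖‖deriv (fun z : ℂ => (1 - conj c * z) ^ ((-q / 2 : ℝ) : ℂ)) z‖ ^ 2 *
        (1 - ‖mobius a z‖ ^ 2) ^ p‖ ≤ (1 - ‖a‖ ^ 2) ^ p * twoPointKernel p q a c z := by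
  have hv := norm_one_sub_conj_mul_pos hc hz
  have ha' : 0 ≤ 1 - ‖a‖ ^ 2 := by nlinarith [norm_nonneg a]
  have hz' : 0 ≤ 1 - ‖z‖ ^ 2 := by nlinarith [norm_nonneg z]
  have hderiv : ‖deriv (fun z : ℂ => (1 - conj c * z) ^ ((-q / 2 : ℝ) : ℂ)) z‖ ^ 2 ≤
      ‖1 - conj c * z‖ ^ (-(2 + q)) := by
    rw [norm_deriv_one_sub_conj_mul_cpow hc hz, mul_pow, show -(2 + q) = (-q / 2 - 1) * (2 : ℕ)
      by push_cast; ring, Real.rpow_mul_natCast hv.le]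
    refine mul_le_of_le_one_left (by positivity) ?_
    rw [mul_pow, sq_abs]
    have : (-q / 2) ^ 2 ≤ 1 := by nlinarith [abs_le.1 hq]
    nlinarith [norm_nonneg c, sq_nonneg ‖c‖]
  rw [one_sub_norm_mobius_sq_rpow ha hz, Real.norm_of_nonneg (by positivity), twoPointKernel,
    Real.mul_rpow ha' hz']
  calc _ ≤ ‖1 - conj c * z‖ ^ (-(2 + q)) *
        ((1 - ‖a‖ ^ 2) ^ p * (1 - ‖z‖ ^ 2) ^ p * ‖1 - conj a * z‖ ^ (-(2 * p))) := by gcongr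
    _ = _ := by ring

end TestFunction

/-- The test functions `f_c(z) = (1 - c̄ z)^{-p(1-λ)/2}` are uniformly in `𝒟_p^λ`. -/
theorem stmt_7 (p lam : ℝ) (hp : 0 < p) (hp1 : p < 1) (hl : 0 < lam) (hl1 : lam < 1) :
    ∃ K : ℝ, ∀ a c : ℂ, a ∈ unitDisc → c ∈ unitDisc →
      (1 - ‖a‖ ^ 2) ^ (p * (1 - lam)) *
        dirEnergy p a
          (fun z : ℂ => (1 - (starRingEnd ℂ) c * z) ^ ((-(p * (1 - lam)) / 2 : ℝ) : ℂ)) ≤ K := by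
  set q := p * (1 - lam)
  have hq : 0 < q := mul_pos hp (by linarith)
  have hqp : q < p := by nlinarith
  obtain ⟨C, hC, htwo⟩ := exists_lintegral_twoPointKernel_le hq hqp (by linarith)
  refine ⟨2 ^ (p + q) * C, fun a c ha hc => ?_⟩
  rw [mem_unitDisc] at ha hc
  have hδ := norm_one_sub_conj_mul_pos ha.le hc
  have ha' : 0 < 1 - ‖a‖ ^ 2 := by nlinarith [norm_nonneg a]
  have henergy : dirEnergy p a (fun z : ℂ => (1 - conj c * z) ^ ((-q / 2 : ℝ) : ℂ)) ≤
      (1 - ‖a‖ ^ 2) ^ p * (C * ‖1 - conj a * c‖ ^ (-(p + q))) :=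
    setIntegral_le_of_norm_le_mul (by positivity) (by positivity)
      (by unfold twoPointKernel; fun_prop)
      (fun z hz => norm_deriv_sq_mul_one_sub_norm_mobius_sq_rpow_le ha.le hc.le (mem_unitDisc.1 hz)
        (abs_le.2 ⟨by linarith, by linarith⟩))
      (htwo a c ha.le hc)
  have hratio : (1 - ‖a‖ ^ 2) / ‖1 - conj a * c‖ ≤ 2 := by
    rw [div_le_iff₀ hδ, norm_one_sub_conj_mul_comm]
    exact one_sub_norm_sq_le_two_mul_norm_one_sub_conj_mul hc.le ha.le
  calc (1 - ‖a‖ ^ 2) ^ q * dirEnergy p a (fun z : ℂ => (1 - conj c * z) ^ ((-q / 2 : ℝ) : ℂ))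
      ≤ (1 - ‖a‖ ^ 2) ^ q * ((1 - ‖a‖ ^ 2) ^ p * (C * ‖1 - conj a * c‖ ^ (-(p + q)))) := by
        gcongr
    _ = C * ((1 - ‖a‖ ^ 2) / ‖1 - conj a * c‖) ^ (p + q) := by
        rw [Real.div_rpow ha'.le hδ.le, Real.rpow_neg hδ.le, Real.rpow_add ha']
        ring
    _ ≤ 2 ^ (p + q) * C := by
        rw [mul_comm]
        gcongr
end
end

section
/- Let $0\le p\le 1$. There is a constant $C=C(p)$ such that for every $f$ in the weighted Dirichlet space $\mathcal{D}_p$ and every $a\in\mathbb{D}$, $\|f\circ\varphi_a-f(a)\|_{\mathcal{D}_p}\le C\,\|f\|_{\mathcal{D}_p}\,(1-|a|^2)^{-p/2}$, where $\varphi_a(z)=(a-z)/(1-\bar a z)$. -/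
open MeasureTheory Complex Metric Set

noncomputable section

/-!
For `z` in the disc, `1 - |φ_a(z)|² = (1 - |a|²)(1 - |z|²) / |1 - ā z|²`, and `|1 - ā z| ≥ 1 - |a|`
gives `1 - |φ_a(z)|² ≤ 4 (1 - |z|²) / (1 - |a|²)`. Raising this to the power `p ≥ 0` bounds the
weight of `dirEnergy p a f` pointwise by `4^p (1 - |a|²)^{-p}` times the weight of the `𝒟_p` norm,
so the theorem holds with `C = 2^p`.
-/

lemma normSq_one_sub_conj_mul_sub_normSq_sub (a z : ℂ) :
    ‖1 - (starRingEnd ℂ) a * z‖ ^ 2 - ‖a - z‖ ^ 2 = (1 - ‖a‖ ^ 2) * (1 - ‖z‖ ^ 2) := by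
  simp only [Complex.sq_norm, Complex.normSq_apply, Complex.sub_re, Complex.sub_im,
    Complex.mul_re, Complex.mul_im, Complex.one_re, Complex.one_im, Complex.conj_re,
    Complex.conj_im]
  ring

lemma one_sub_norm_le_norm_one_sub_conj_mul {a z : ℂ} (hz : ‖z‖ ≤ 1) :
    1 - ‖a‖ ≤ ‖1 - (starRingEnd ℂ) a * z‖ := by
  have : ‖(starRingEnd ℂ) a * z‖ ≤ ‖a‖ := by
    rw [norm_mul, RCLike.norm_conj]
    exact mul_le_of_le_one_right (norm_nonneg a) hz
  calc 1 - ‖a‖ ≤ ‖(1 : ℂ)‖ - ‖(starRingEnd ℂ) a * z‖ := by rw [norm_one]; linarith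
    _ ≤ ‖1 - (starRingEnd ℂ) a * z‖ := norm_sub_norm_le _ _

lemma one_sub_sq_norm_mobius {a z : ℂ} (h : 1 - (starRingEnd ℂ) a * z ≠ 0) :
    1 - ‖mobius a z‖ ^ 2 =
      (1 - ‖a‖ ^ 2) * (1 - ‖z‖ ^ 2) / ‖1 - (starRingEnd ℂ) a * z‖ ^ 2 := by
  rw [← normSq_one_sub_conj_mul_sub_normSq_sub, mobius, norm_div, div_pow, sub_div,
    div_self (pow_ne_zero 2 (norm_ne_zero_iff.2 h))]

lemma one_sub_sq_norm_mobius_nonneg {a z : ℂ} (ha : ‖a‖ < 1) (hz : ‖z‖ ≤ 1) :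
    0 ≤ 1 - ‖mobius a z‖ ^ 2 := by
  have hD : 0 < ‖1 - (starRingEnd ℂ) a * z‖ :=
    (sub_pos.2 ha).trans_le (one_sub_norm_le_norm_one_sub_conj_mul hz)
  rw [one_sub_sq_norm_mobius (norm_pos_iff.1 hD)]
  have : ‖a‖ ^ 2 ≤ 1 := pow_le_one₀ (norm_nonneg a) ha.le
  have : ‖z‖ ^ 2 ≤ 1 := pow_le_one₀ (norm_nonneg z) hz
  apply div_nonneg (mul_nonneg _ _) (sq_nonneg _) <;> linarith

lemma one_sub_sq_norm_mobius_le {a z : ℂ} (ha : ‖a‖ < 1) (hz : ‖z‖ ≤ 1) :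
    1 - ‖mobius a z‖ ^ 2 ≤ 4 * (1 - ‖z‖ ^ 2) / (1 - ‖a‖ ^ 2) := by
  set D := ‖1 - (starRingEnd ℂ) a * z‖
  have hD : 1 - ‖a‖ ≤ D := one_sub_norm_le_norm_one_sub_conj_mul hz
  have hDpos : 0 < D := (sub_pos.2 ha).trans_le hD
  have ha0 : 0 < 1 - ‖a‖ ^ 2 := by nlinarith [norm_nonneg a]
  have hz0 : 0 ≤ 1 - ‖z‖ ^ 2 := by nlinarith [norm_nonneg z]
  have h2D : 1 - ‖a‖ ^ 2 ≤ 2 * D := by nlinarith [norm_nonneg a]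
  have hkey : (1 - ‖a‖ ^ 2) ^ 2 ≤ 4 * D ^ 2 := by nlinarith
  rw [one_sub_sq_norm_mobius (norm_pos_iff.1 hDpos), div_le_div_iff₀ (by positivity) ha0]
  nlinarith [mul_le_mul_of_nonneg_right hkey hz0]

lemma rpow_one_sub_sq_norm_mobius_le {p : ℝ} (hp : 0 ≤ p) {a z : ℂ} (ha : ‖a‖ < 1)
    (hz : ‖z‖ ≤ 1) :
    (1 - ‖mobius a z‖ ^ 2) ^ p ≤ 4 ^ p * (1 - ‖a‖ ^ 2) ^ (-p) * (1 - ‖z‖ ^ 2) ^ p := by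
  have ha0 : 0 ≤ 1 - ‖a‖ ^ 2 := by nlinarith [norm_nonneg a]
  have hz0 : 0 ≤ 1 - ‖z‖ ^ 2 := by nlinarith [norm_nonneg z]
  calc (1 - ‖mobius a z‖ ^ 2) ^ p ≤ (4 * (1 - ‖z‖ ^ 2) / (1 - ‖a‖ ^ 2)) ^ p :=
        Real.rpow_le_rpow (one_sub_sq_norm_mobius_nonneg ha hz)
          (one_sub_sq_norm_mobius_le ha hz) hp
    _ = 4 ^ p * (1 - ‖a‖ ^ 2) ^ (-p) * (1 - ‖z‖ ^ 2) ^ p := by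
        rw [div_eq_mul_inv, Real.mul_rpow (by positivity) (inv_nonneg.2 ha0),
          Real.mul_rpow (by norm_num) hz0, Real.inv_rpow ha0, ← Real.rpow_neg ha0]
        ring

lemma dirEnergy_le {p : ℝ} (hp : 0 ≤ p) {f : ℂ → ℂ}
    (hf : IntegrableOn (fun z => ‖deriv f z‖ ^ 2 * (1 - ‖z‖ ^ 2) ^ p) unitDisc dA)
    {a : ℂ} (ha : a ∈ unitDisc) :
    dirEnergy p a f ≤ 4 ^ p * (1 - ‖a‖ ^ 2) ^ (-p) *
      ∫ z in unitDisc, ‖deriv f z‖ ^ 2 * (1 - ‖z‖ ^ 2) ^ p ∂dA := by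
  have ha1 : ‖a‖ < 1 := mem_ball_zero_iff.1 ha
  rw [← integral_const_mul, dirEnergy]
  refine integral_mono_of_nonneg ?_ (hf.const_mul _) ?_ <;>
    filter_upwards [ae_restrict_mem (μ := dA) measurableSet_ball] with z hz <;>
    have hz1 : ‖z‖ ≤ 1 := (mem_ball_zero_iff.1 hz).le
  · have := Real.rpow_nonneg (one_sub_sq_norm_mobius_nonneg ha1 hz1) p
    positivity
  · calc ‖deriv f z‖ ^ 2 * (1 - ‖mobius a z‖ ^ 2) ^ p
        ≤ ‖deriv f z‖ ^ 2 * (4 ^ p * (1 - ‖a‖ ^ 2) ^ (-p) * (1 - ‖z‖ ^ 2) ^ p) :=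
          mul_le_mul_of_nonneg_left (rpow_one_sub_sq_norm_mobius_le hp ha1 hz1) (sq_nonneg _)
      _ = _ := by ring

theorem stmt_18_general (p : ℝ) (hp : 0 ≤ p) :
    ∃ C : ℝ, 0 < C ∧ ∀ f : ℂ → ℂ, memDp p f → ∀ a ∈ unitDisc,
      dirEnergy p a f ≤ C ^ 2 * (1 - ‖a‖ ^ 2) ^ (-p) * dpNormSq p f := by
  refine ⟨2 ^ p, by positivity, fun f hf a ha => ?_⟩
  have ha0 : 0 < 1 - ‖a‖ ^ 2 := by nlinarith [norm_nonneg a, mem_ball_zero_iff.1 ha]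
  have hC : ((2 : ℝ) ^ p) ^ 2 = 4 ^ p := by
    rw [← Real.rpow_natCast, ← Real.rpow_mul (by norm_num), mul_comm, Real.rpow_mul (by norm_num)]
    norm_num
  calc dirEnergy p a f ≤ 4 ^ p * (1 - ‖a‖ ^ 2) ^ (-p) *
        ∫ z in unitDisc, ‖deriv f z‖ ^ 2 * (1 - ‖z‖ ^ 2) ^ p ∂dA := dirEnergy_le hp hf.2 ha
    _ ≤ (2 ^ p) ^ 2 * (1 - ‖a‖ ^ 2) ^ (-p) * dpNormSq p f := by
        rw [hC, dpNormSq]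
        gcongr
        exact le_add_of_nonneg_left (sq_nonneg _)

/-- Norm growth of hyperbolic translates in the weighted Dirichlet space:
`∫_𝔻 |f'(z)|² (1-|φ_a(z)|²)^p dm(z) ≤ C² (1-|a|²)^{-p} ‖f‖²_{𝒟_p}`. -/
theorem stmt_18 (p : ℝ) (hp : 0 ≤ p) (hp1 : p ≤ 1) :
    ∃ C : ℝ, 0 < C ∧ ∀ f : ℂ → ℂ, memDp p f → ∀ a ∈ unitDisc,
      dirEnergy p a f ≤ C ^ 2 * (1 - ‖a‖ ^ 2) ^ (-p) * dpNormSq p f :=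
  stmt_18_general p hp
end
end
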